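/- Define n̂₁ = (1,0,0), n̂₂ = (0, 1/√5, −2/√5), n̂₃ = (0, 2/√5, 1/√5) in ℝ³. Then (n̂₁, n̂₂, n̂₃) is an orthonormal basis, and for every q ∈ ℝ², writing φⱼ = F(q) · n̂ⱼ with F(q) = (F₁(q), F₂(q), F₃(q)), one has φ₃ = (φ₁² − 4)/√5. -/

import Mathlib

open Real

noncomputable def Fvec (q : ℝ × ℝ) : ℝ × ℝ × ℝ :=
  (2 * Real.cos q.1 + 2 * Real.cos q.2,
   2 * Real.cos (q.1 - q.2) + 2 * Real.cos (q.1 + q.2),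
   2 * Real.cos (2 * q.1) + 2 * Real.cos (2 * q.2))

def dot3 (K F : ℝ × ℝ × ℝ) : ℝ := K.1 * F.1 + K.2.1 * F.2.1 + K.2.2 * F.2.2

noncomputable def n1 : ℝ × ℝ × ℝ := (1, 0, 0)
noncomputable def n2 : ℝ × ℝ × ℝ := (0, 1 / Real.sqrt 5, -2 / Real.sqrt 5)
noncomputable def n3 : ℝ × ℝ × ℝ := (0, 2 / Real.sqrt 5, 1 / Real.sqrt 5)

/-- Product-to-sum: `4 cos a cos b = 2 cos (a - b) + 2 cos (a + b)` and `4 cos² a = 2 + 2 cos 2a`. -/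
theorem two_cos_add_two_cos_sq (a b : ℝ) :
    (2 * cos a + 2 * cos b) ^ 2 =
      2 * (2 * cos (a - b) + 2 * cos (a + b)) + (2 * cos (2 * a) + 2 * cos (2 * b)) + 4 := by
  rw [cos_sub, cos_add, cos_two_mul, cos_two_mul]
  ring

theorem Fvec_fst_sq (q : ℝ × ℝ) : (Fvec q).1 ^ 2 = 2 * (Fvec q).2.1 + (Fvec q).2.2 + 4 :=
  two_cos_add_two_cos_sq q.1 q.2

theorem sqrt_five_mul_self : √5 * √5 = 5 :=
  mul_self_sqrt (by norm_num)

theorem dot3_n1 (F : ℝ × ℝ × ℝ) : dot3 F n1 = F.1 := by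
  simp [dot3, n1]

theorem dot3_n3 (F : ℝ × ℝ × ℝ) : dot3 F n3 = (2 * F.2.1 + F.2.2) / √5 := by
  simp only [dot3, n3]
  ring

theorem dot3_n3_eq_of_fst_sq {F : ℝ × ℝ × ℝ} (hF : F.1 ^ 2 = 2 * F.2.1 + F.2.2 + 4) :
    dot3 F n3 = (dot3 F n1 ^ 2 - 4) / √5 := by
  rw [dot3_n3, dot3_n1, hF]
  ring

theorem n1_n2_n3_orthonormal :
    dot3 n1 n1 = 1 ∧ dot3 n2 n2 = 1 ∧ dot3 n3 n3 = 1 ∧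
      dot3 n1 n2 = 0 ∧ dot3 n1 n3 = 0 ∧ dot3 n2 n3 = 0 := by
  have h5 : √5 ≠ 0 := by positivity
  refine ⟨by simp [dot3, n1], ?_, ?_, by simp [dot3, n1, n2], by simp [dot3, n1, n3], ?_⟩ <;>
    simp only [dot3, n2, n3] <;> field_simp <;> linarith [sqrt_five_mul_self]

theorem natural_frame :
    (dot3 n1 n1 = 1 ∧ dot3 n2 n2 = 1 ∧ dot3 n3 n3 = 1 ∧
     dot3 n1 n2 = 0 ∧ dot3 n1 n3 = 0 ∧ dot3 n2 n3 = 0) ∧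
    ∀ q : ℝ × ℝ,
      dot3 (Fvec q) n3 = ((dot3 (Fvec q) n1) ^ 2 - 4) / Real.sqrt 5 :=
  ⟨n1_n2_n3_orthonormal, fun q => dot3_n3_eq_of_fst_sq (Fvec_fst_sq q)⟩
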